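/- arXiv:1506.02137 — 2 statements merged into one kernel-verified Lean document; each statement's English description precedes it below -/
import Mathlib

section
/- For all integers n \ge k \ge 1, the Bell polynomial of the second kind evaluated at (1/2, 1/3, ..., 1/(n-k+2)) equals (n!/(n+k)!) * \sum_{i=0}^{k} (-1)^{k-i} * binom(n+k, k-i) * S(n+i, i), where S denotes the Stirling numbers of the second kind. -/
open Nat

/-- Stirling numbers of the second kind. -/
def stirling2 : ℕ → ℕ → ℕ
  | 0, 0 => 1
  | 0, _ + 1 => 0
  | _ + 1, 0 => 0
  | n + 1, k + 1 => (k + 1) * stirling2 n (k + 1) + stirling2 n k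

/-- The Bell polynomials of the second kind `B_{n,k}(x_1, x_2, …)`, where `x i` denotes `x_i`. -/
noncomputable def bellPoly (n k : ℕ) (x : ℕ → ℚ) : ℚ :=
  ∑ ℓ ∈ (Fintype.piFinset fun _ : Fin n => Finset.range (n + 1)).filter
      (fun ℓ => (∑ i : Fin n, ((i : ℕ) + 1) * ℓ i) = n ∧ (∑ i : Fin n, ℓ i) = k),
    ((n ! : ℚ) / ∏ i : Fin n, ((ℓ i)! : ℚ)) *
      ∏ i : Fin n, (x ((i : ℕ) + 1) / (((i : ℕ) + 1)! : ℚ)) ^ ℓ i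

/-!
The Bell polynomials have the generating function `∑ₙ B_{n,k}(x) tⁿ / n! = (∑ⱼ xⱼ tʲ / j!)ᵏ / k!`.
For `xⱼ = 1 / (j + 1)` the inner series is `(eᵗ - 1 - t) / t`, so
`B_{n,k} = n! / k! · [t^(n+k)] (eᵗ - 1 - t)ᵏ`. Expanding `((eᵗ - 1) - t)ᵏ` binomially, it remains to
know `[tᵐ] (eᵗ - 1)ⁱ = i! S(m, i) / m!`, and both sides satisfy the Stirling recurrence because
`(eᵗ - 1)' = (eᵗ - 1) + 1`.
-/

open Finset PowerSeries

theorem coeff_sum_monomial_pow {ι R : Type*} [DecidableEq ι] [CommSemiring R] (s : Finset ι)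
    (d : ι → ℕ) (a : ι → R) (k m : ℕ) :
    coeff m ((∑ i ∈ s, monomial (d i) (a i)) ^ k) =
      ∑ ℓ ∈ (piAntidiag s k).filter (fun ℓ => ∑ i ∈ s, ℓ i * d i = m),
        Nat.multinomial s ℓ * ∏ i ∈ s, a i ^ ℓ i := by
  rw [sum_pow_eq_sum_piAntidiag, map_sum, sum_filter]
  refine sum_congr rfl fun ℓ _ => ?_
  simp only [monomial_pow, prod_monomial, ← map_natCast C, coeff_C_mul, coeff_monomial, eq_comm,
    mul_ite, mul_zero]

theorem bellPoly_eq_sum_piAntidiag (n k : ℕ) (x : ℕ → ℚ) :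
    bellPoly n k x =
      ∑ ℓ ∈ (piAntidiag (univ : Finset (Fin n)) k).filter
          (fun ℓ => ∑ i : Fin n, ℓ i * ((i : ℕ) + 1) = n),
        ((n ! : ℚ) / ∏ i, ((ℓ i)! : ℚ)) *
          ∏ i : Fin n, (x ((i : ℕ) + 1) / (((i : ℕ) + 1)! : ℚ)) ^ ℓ i := by
  refine sum_congr (ext fun ℓ => ?_) fun _ _ => rfl
  simp only [mem_filter, Fintype.mem_piFinset, mem_range, mem_piAntidiag, mem_univ, implies_true,
    and_true]
  constructor
  · rintro ⟨-, hdeg, hsum⟩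
    exact ⟨hsum, by simpa only [mul_comm] using hdeg⟩
  · rintro ⟨hsum, hdeg⟩
    refine ⟨fun i => ?_, by simpa only [mul_comm] using hdeg, hsum⟩
    calc ℓ i ≤ ℓ i * ((i : ℕ) + 1) := Nat.le_mul_of_pos_right _ i.succ_pos
      _ ≤ ∑ j : Fin n, ℓ j * ((j : ℕ) + 1) :=
        single_le_sum (f := fun j : Fin n => ℓ j * ((j : ℕ) + 1)) (fun j _ => Nat.zero_le _)
          (mem_univ i)
      _ < n + 1 := by omega

theorem bellPoly_eq_coeff_sum_monomial_pow (n k : ℕ) (x : ℕ → ℚ) :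
    bellPoly n k x = n ! / k ! * coeff n
      ((∑ i : Fin n, monomial ((i : ℕ) + 1) (x ((i : ℕ) + 1) / ((i : ℕ) + 1)!)) ^ k) := by
  rw [bellPoly_eq_sum_piAntidiag, coeff_sum_monomial_pow, mul_sum]
  refine sum_congr rfl fun ℓ hℓ => ?_
  have hsum : ∑ i, ℓ i = k := (mem_piAntidiag.mp (mem_filter.mp hℓ).1).1
  have hmult : (Nat.multinomial univ ℓ : ℚ) * ∏ i, ((ℓ i)! : ℚ) = k ! := by
    rw [mul_comm, ← hsum]
    exact_mod_cast Nat.multinomial_spec univ ℓ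
  have hprod : ∏ i, ((ℓ i)! : ℚ) ≠ 0 := prod_ne_zero_iff.mpr fun i _ => by positivity
  field_simp
  rw [← hmult]
  ring

theorem coeff_pow_eq_coeff_trunc_pow {R : Type*} [CommSemiring R] (f : R⟦X⟧) (n k : ℕ) :
    coeff n (f ^ k) = coeff n ((trunc (n + 1) f : R⟦X⟧) ^ k) := by
  rw [← coeff_coe_trunc_of_lt n.lt_succ_self, ← trunc_trunc_pow,
    coeff_coe_trunc_of_lt n.lt_succ_self]

theorem coe_trunc_succ_eq_sum_monomial {R : Type*} [CommSemiring R] {f : R⟦X⟧}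
    (hf : constantCoeff f = 0) (n : ℕ) :
    (trunc (n + 1) f : R⟦X⟧) =
      ∑ i : Fin n, monomial ((i : ℕ) + 1) (coeff ((i : ℕ) + 1) f) := by
  rw [trunc_apply, Nat.Ico_zero_eq_range, sum_range_succ', coeff_zero_eq_constantCoeff_apply, hf,
    Polynomial.monomial_zero_right, add_zero,
    Fin.sum_univ_eq_sum_range (fun i => monomial (i + 1) (coeff (i + 1) f)),
    ← Polynomial.coeToPowerSeries.ringHom_apply, map_sum]
  simp only [Polynomial.coeToPowerSeries.ringHom_apply, Polynomial.coe_monomial]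

theorem bellPoly_eq_coeff_pow {n k : ℕ} {x : ℕ → ℚ} {f : ℚ⟦X⟧}
    (hf : constantCoeff f = 0)
    (hx : ∀ j, 1 ≤ j → j ≤ n → coeff j f = x j / j !) :
    bellPoly n k x = n ! / k ! * coeff n (f ^ k) := by
  have hcoeff (i : Fin n) : coeff ((i : ℕ) + 1) f = x ((i : ℕ) + 1) / ((i : ℕ) + 1)! :=
    hx _ (by omega) i.is_lt
  rw [coeff_pow_eq_coeff_trunc_pow, coe_trunc_succ_eq_sum_monomial hf,
    bellPoly_eq_coeff_sum_monomial_pow]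
  simp only [hcoeff]
theorem derivative_exp_sub_one_pow_succ (i : ℕ) :
    d⁄dX ℚ ((exp ℚ - 1) ^ (i + 1)) =
      ((i : ℚ) + 1) • ((exp ℚ - 1) ^ (i + 1) + (exp ℚ - 1) ^ i) := by
  rw [derivative_pow, map_sub, derivative_exp, derivative_one, smul_eq_C_mul, map_add,
    map_natCast, map_one]
  push_cast
  ring

theorem coeff_exp_sub_one_pow (m i : ℕ) :
    coeff m ((exp ℚ - 1) ^ i) = (i ! * stirling2 m i / m ! : ℚ) := by
  induction m generalizing i with
  | zero =>
    cases i <;> simp [stirling2]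
  | succ m ih =>
    cases i with
    | zero => simp [stirling2]
    | succ i =>
      have h := coeff_derivative ((exp ℚ - 1) ^ (i + 1)) m
      rw [derivative_exp_sub_one_pow_succ, coeff_smul, map_add, ih, ih, smul_eq_mul] at h
      rw [stirling2]
      simp only [Nat.factorial_succ] at h ⊢
      push_cast at h ⊢
      field_simp at h ⊢
      linear_combination -h

theorem coeff_exp_sub_one_sub_X_pow (n k : ℕ) :
    coeff (n + k) ((exp ℚ - 1 - X) ^ k) =
      ∑ i ∈ range (k + 1),
        (-1) ^ (k - i) * k.choose i * (i ! * stirling2 (n + i) i / (n + i)! : ℚ) := by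
  rw [sub_eq_add_neg _ X, add_pow, map_sum]
  refine sum_congr rfl fun i hi => ?_
  have hik : i ≤ k := by rw [mem_range] at hi; omega
  have hsummand : (exp ℚ - 1) ^ i * (-X) ^ (k - i) * (k.choose i : ℚ⟦X⟧) =
      C ((-1 : ℚ) ^ (k - i) * k.choose i) * (X ^ (k - i) * (exp ℚ - 1) ^ i) := by
    simp only [neg_pow X, map_mul, map_pow, map_neg, map_one, map_natCast]
    ring
  rw [hsummand, coeff_C_mul, coeff_X_pow_mul', if_pos (by omega),
    show n + k - (k - i) = n + i by omega, coeff_exp_sub_one_pow]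

theorem bellPoly_inv_eq_sum_stirling_general (n k : ℕ) :
    bellPoly n k (fun i => 1 / ((i : ℚ) + 1)) =
      ((n ! : ℚ) / ((n + k)! : ℚ)) *
        ∑ i ∈ Finset.range (k + 1),
          (-1 : ℚ) ^ (k - i) * ((n + k).choose (k - i) : ℚ) * (stirling2 (n + i) i : ℚ) := by
  obtain ⟨E, hE⟩ : X ∣ exp ℚ - 1 - X := X_dvd_iff.mpr (by simp)
  have hcoeffE (j : ℕ) : coeff j E = coeff (j + 1) (exp ℚ - 1 - X) := by
    rw [hE, coeff_succ_X_mul]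
  have hbell : bellPoly n k (fun i => 1 / ((i : ℚ) + 1)) = n ! / k ! * coeff n (E ^ k) := by
    refine bellPoly_eq_coeff_pow (by simpa using hcoeffE 0) fun j hj _ => ?_
    rw [hcoeffE, map_sub, map_sub, coeff_exp, coeff_one, coeff_X, if_neg (by omega),
      if_neg (by omega), sub_zero, sub_zero, Algebra.algebraMap_self, RingHom.id_apply,
      Nat.factorial_succ]
    push_cast
    field_simp
  rw [hbell, ← coeff_X_pow_mul (E ^ k) k n, ← mul_pow, ← hE, coeff_exp_sub_one_sub_X_pow,
    mul_sum, mul_sum]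
  refine sum_congr rfl fun i hi => ?_
  have hik : i ≤ k := by rw [mem_range] at hi; omega
  rw [Nat.cast_choose ℚ hik, Nat.cast_choose ℚ (by omega : k - i ≤ n + k),
    show n + k - (k - i) = n + i by omega]
  field_simp

theorem bellPoly_inv_eq_sum_stirling (n k : ℕ) (hk : 1 ≤ k) (hkn : k ≤ n) :
    bellPoly n k (fun i => 1 / ((i : ℚ) + 1)) =
      ((n ! : ℚ) / ((n + k)! : ℚ)) *
        ∑ i ∈ Finset.range (k + 1),
          (-1 : ℚ) ^ (k - i) * ((n + k).choose (k - i) : ℚ) * (stirling2 (n + i) i : ℚ) :=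
  bellPoly_inv_eq_sum_stirling_general n k
end

section
/- For every positive integer n, \sum_{i=1}^{n} (-1)^i * (binom(n+1, i+1) / binom(n+i, i)) * S(n+i, i) equals 0 whenever n is odd and n \ge 3. -/
/-!
With `E = (exp X - 1) / X`, the exponential generating function of the Stirling numbers,
`∑ₘ S(m, k) Xᵐ / m! = (exp X - 1)ᵏ / k!`, reads `S(n + i, i) / C(n + i, i) = n! [Xⁿ] Eⁱ`.
The sum is therefore `n! [Xⁿ] P` for `P = ∑ᵢ (-1)ⁱ C(n+1, i+1) Eⁱ`, where `E P = 1 - (1 - E)ⁿ⁺¹`.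
Since `E` is the reciprocal of the Bernoulli series `B = X / (exp X - 1)`, we get
`P = B - B (1 - E)ⁿ⁺¹`, and the second term is `O(Xⁿ⁺¹)`, so the sum is `n! [Xⁿ] B = Bₙ`,
which vanishes for odd `n ≥ 3`.
-/

open Finset PowerSeries Nat

theorem one_sub_pow_eq_one_sub_mul_sum {R : Type*} [CommRing R] (x : R) (m : ℕ) :
    (1 - x) ^ m = 1 - x * ∑ i ∈ range m, ((-1) ^ i * m.choose (i + 1) : ℤ) • x ^ i := by
  rw [sub_eq_neg_add 1 x, add_pow, sum_range_succ', mul_sum]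
  simp only [pow_zero, one_pow, mul_one, Nat.choose_zero_right, Nat.cast_one,
    zsmul_eq_mul]
  rw [add_comm, sub_eq_add_neg, ← sum_neg_distrib]
  congr 1
  exact sum_congr rfl fun i _ => by push_cast; ring

namespace PowerSeries

theorem derivative_exp_sub_one_pow_succ (k : ℕ) :
    d⁄dX ℚ ((exp ℚ - 1) ^ (k + 1)) = (k + 1 : ℚ) • ((exp ℚ - 1) ^ (k + 1) + (exp ℚ - 1) ^ k) := by
  rw [derivative_pow, map_sub, derivative_exp, derivative_one, sub_zero, smul_eq_C_mul, map_add,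
    map_natCast, map_one, Nat.cast_add_one, add_tsub_cancel_right]
  ring

/-- Differentiating `(exp X - 1)ᵏ⁺¹` reproduces the recurrence defining `stirling2`. -/
theorem factorial_mul_coeff_exp_sub_one_pow (m k : ℕ) :
    (m ! : ℚ) * coeff m ((exp ℚ - 1) ^ k) = stirling2 m k * k ! := by
  induction m generalizing k with
  | zero =>
    cases k <;> simp [coeff_zero_eq_constantCoeff_apply, stirling2]
  | succ m ih =>
    cases k with
    | zero => simp [stirling2, coeff_one]
    | succ k =>
      have h := coeff_derivative ((exp ℚ - 1) ^ (k + 1)) m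
      rw [derivative_exp_sub_one_pow_succ, coeff_smul, map_add, smul_eq_mul] at h
      calc ((m + 1) ! : ℚ) * coeff (m + 1) ((exp ℚ - 1) ^ (k + 1))
          = (k + 1) * ((m ! : ℚ) * coeff m ((exp ℚ - 1) ^ (k + 1)) +
              m ! * coeff m ((exp ℚ - 1) ^ k)) := by
            push_cast [factorial_succ]
            linear_combination -(m ! : ℚ) * h
        _ = stirling2 (m + 1) (k + 1) * (k + 1) ! := by
            rw [ih, ih]
            simp only [stirling2, factorial_succ]
            push_cast
            ring

noncomputable def expSubOneDivX : ℚ⟦X⟧ := mk fun n => 1 / (n + 1)!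

theorem X_mul_expSubOneDivX : X * expSubOneDivX = exp ℚ - 1 := by
  ext (_ | n) <;> simp [expSubOneDivX, coeff_exp, coeff_one]

theorem constantCoeff_expSubOneDivX : constantCoeff expSubOneDivX = 1 := by
  simp [expSubOneDivX, ← coeff_zero_eq_constantCoeff_apply]

theorem bernoulliPowerSeries_mul_expSubOneDivX : bernoulliPowerSeries ℚ * expSubOneDivX = 1 := by
  refine mul_left_cancel₀ (X_ne_zero (R := ℚ)) ?_
  rw [mul_one, mul_left_comm, X_mul_expSubOneDivX, bernoulliPowerSeries_mul_exp_sub_one]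

theorem factorial_mul_coeff_expSubOneDivX_pow (n i : ℕ) :
    (n ! : ℚ) * coeff n (expSubOneDivX ^ i) = stirling2 (n + i) i / (n + i).choose i := by
  have h := factorial_mul_coeff_exp_sub_one_pow (n + i) i
  rw [← X_mul_expSubOneDivX, mul_pow, coeff_X_pow_mul] at h
  rw [Nat.cast_choose ℚ (Nat.le_add_left i n), Nat.add_sub_cancel]
  field_simp
  linear_combination h

end PowerSeries

theorem bernoulli_eq_sum_stirling2 {n : ℕ} (hn : n ≠ 0) :
    bernoulli n = ∑ i ∈ Icc 1 n,
      (-1 : ℚ) ^ i * (((n + 1).choose (i + 1) : ℚ) / ((n + i).choose i : ℚ)) *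
        (stirling2 (n + i) i : ℚ) := by
  set E := expSubOneDivX
  set P := ∑ i ∈ range (n + 1), ((-1) ^ i * (n + 1).choose (i + 1) : ℤ) • E ^ i
  have hP : P = bernoulliPowerSeries ℚ * (1 - (1 - E) ^ (n + 1)) := by
    rw [one_sub_pow_eq_one_sub_mul_sum, sub_sub_cancel, ← mul_assoc,
      bernoulliPowerSeries_mul_expSubOneDivX, one_mul]
  have hX : (X : ℚ⟦X⟧) ^ (n + 1) ∣ (1 - E) ^ (n + 1) :=
    pow_dvd_pow_of_dvd (X_dvd_iff.2 (by simp [E, constantCoeff_expSubOneDivX])) _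
  have hcoeff : coeff n P = bernoulli n / n ! := by
    rw [hP, mul_sub, mul_one, map_sub, X_pow_dvd_iff.1 (dvd_mul_of_dvd_right hX _) n n.lt_succ_self,
      sub_zero, bernoulliPowerSeries, coeff_mk, Algebra.algebraMap_self, RingHom.id_apply]
  have hS : stirling2 n 0 = 0 := by
    obtain ⟨m, rfl⟩ := exists_eq_succ_of_ne_zero hn
    rfl
  calc bernoulli n = n ! * coeff n P := by rw [hcoeff]; field_simp
    _ = ∑ i ∈ range (n + 1), (-1 : ℚ) ^ i * (n + 1).choose (i + 1) * (n ! * coeff n (E ^ i)) := by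
      rw [map_sum, mul_sum]
      refine sum_congr rfl fun i _ => ?_
      rw [map_zsmul, zsmul_eq_mul]
      push_cast
      ring
    _ = _ := by
      rw [range_eq_Ico, sum_eq_sum_Ico_succ_bot (by positivity), Ico_add_one_right_eq_Icc]
      simp only [E, factorial_mul_coeff_expSubOneDivX_pow, add_zero, hS, Nat.cast_zero, zero_div,
        mul_zero, zero_add]
      exact sum_congr rfl fun i _ => by ring

theorem sum_stirling_eq_zero_of_odd (n : ℕ) (hn : Odd n) (hn3 : 3 ≤ n) :
    ∑ i ∈ Finset.Icc 1 n,
        (-1 : ℚ) ^ i * (((n + 1).choose (i + 1) : ℚ) / ((n + i).choose i : ℚ)) *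
          (stirling2 (n + i) i : ℚ) = 0 := by
  rw [← bernoulli_eq_sum_stirling2 (by omega), bernoulli_eq_zero_of_odd hn (by omega)]
end
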